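/- Let p_c ∈ (0,1), TPR ∈ (0,1], and FPR ∈ [0,1] be real numbers, and set p_u := 1 - (p_c·TPR + (1 - p_c)·FPR). Define, for each natural number n ≥ 1, the expected accuracy a(n) := p_c·TPR·(1 - p_u^n)/(1 - p_u) + p_u^(n-1)·p_c. Then the sequence a(n) converges as n → ∞ and lim_{n→∞} a(n) = 1 / (1 + (FPR/TPR)·((1 - p_c)/p_c)). -/
import Mathlib


/-- **Asymptotic model accuracy.**
Let `p_c ∈ (0,1)`, `TPR ∈ (0,1]`, `FPR ∈ [0,1]` and set
`p_u := 1 - (p_c*TPR + (1 - p_c)*FPR)`.  The expected accuracy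
`a n = p_c*TPR*(1 - p_u^n)/(1 - p_u) + p_u^(n-1)*p_c` converges to
`1 / (1 + (FPR/TPR)*((1 - p_c)/p_c))` as `n → ∞`. -/
theorem asymptotic_model_accuracy
    (p_c TPR FPR : ℝ)
    (hpc0 : 0 < p_c) (hpc1 : p_c < 1)
    (hTPR0 : 0 < TPR) (hTPR1 : TPR ≤ 1)
    (hFPR0 : 0 ≤ FPR) (hFPR1 : FPR ≤ 1)
    (p_u : ℝ) (hpu : p_u = 1 - (p_c * TPR + (1 - p_c) * FPR))
    (a : ℕ → ℝ)
    (ha : ∀ n : ℕ, 1 ≤ n →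
      a n = p_c * TPR * (1 - p_u ^ n) / (1 - p_u) + p_u ^ (n - 1) * p_c) :
    Filter.Tendsto a Filter.atTop
      (nhds (1 / (1 + (FPR / TPR) * ((1 - p_c) / p_c)))) := by
  have hden : 1 - p_u = p_c * TPR + (1 - p_c) * FPR := by rw [hpu]; ring
  have hpos : 0 < 1 - p_u := by
    rw [hden]
    have h1 : 0 < p_c * TPR := mul_pos hpc0 hTPR0
    have h2 : 0 ≤ (1 - p_c) * FPR := mul_nonneg (by linarith) hFPR0
    linarith
  have hpu0 : 0 ≤ p_u := by
    rw [hpu]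
    nlinarith [mul_le_one₀ hpc1.le hTPR0.le hTPR1, mul_le_one₀ (by linarith : (1:ℝ) - p_c ≤ 1) hFPR0 hFPR1]
  have habs : |p_u| < 1 := by rw [abs_of_nonneg hpu0]; linarith
  have h1 : Filter.Tendsto (fun n : ℕ => p_u ^ n) Filter.atTop (nhds 0) :=
    tendsto_pow_atTop_nhds_zero_of_abs_lt_one habs
  have h2 : Filter.Tendsto (fun n : ℕ => p_u ^ (n - 1)) Filter.atTop (nhds 0) :=
    h1.comp (Filter.tendsto_sub_atTop_nat 1)
  have key : Filter.Tendsto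
      (fun n : ℕ => p_c * TPR * (1 - p_u ^ n) / (1 - p_u) + p_u ^ (n - 1) * p_c)
      Filter.atTop (nhds (p_c * TPR * (1 - 0) / (1 - p_u) + 0 * p_c)) := by
    exact (((tendsto_const_nhds.sub h1).const_mul _).div_const _).add (h2.mul_const _)
  have heq : p_c * TPR * (1 - 0) / (1 - p_u) + 0 * p_c
      = 1 / (1 + (FPR / TPR) * ((1 - p_c) / p_c)) := by
    rw [hden]
    field_simp
    ring
  rw [← heq]
  refine key.congr' ?_
  filter_upwards [Filter.eventually_ge_atTop 1] with n hn
  exact (ha n hn).symm
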